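/- Let p ∈ [1,∞) and let I be a nonempty set. The submajorization relation ≺_s on ℓ^p(I)^+ is reflexive and transitive, i.e., it is a pre-order: f ≺_s f for every f ∈ ℓ^p(I)^+, and if f ≺_s g and g ≺_s h for f,g,h ∈ ℓ^p(I)^+ then f ≺_s h. -/

import Mathlib

open scoped ENNReal BigOperators

noncomputable section

/-- ℓᵖ(I) with real scalars. -/
abbrev Lp (I : Type*) (p : ℝ≥0∞) := lp (fun _ : I => ℝ) p

/-- The standard basis vector `e_j` of `ℓᵖ(I)`. -/
def stdVec {I : Type*} (p : ℝ≥0∞) (j : I) : Lp I p :=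
  haveI := Classical.decEq I
  lp.single p j 1

/-- A bounded operator on ℓᵖ(I) is positive if it maps the positive cone into itself. -/
def IsPos {I : Type*} {p : ℝ≥0∞} [Fact (1 ≤ p)] (A : Lp I p →L[ℝ] Lp I p) : Prop :=
  ∀ f : Lp I p, (∀ i, 0 ≤ f i) → ∀ i, 0 ≤ A f i

/-- Doubly stochastic operator on ℓᵖ(I). -/
def DoublyStochastic {I : Type*} {p : ℝ≥0∞} [Fact (1 ≤ p)]
    (A : Lp I p →L[ℝ] Lp I p) : Prop :=
  IsPos A ∧ (∀ i : I, HasSum (fun j : I => A (stdVec p j) i) 1)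
          ∧ (∀ j : I, HasSum (fun i : I => A (stdVec p j) i) 1)

/-- Doubly substochastic operator on ℓᵖ(I) (finite partial sums formulation). -/
def DoublySubstochastic {I : Type*} {p : ℝ≥0∞} [Fact (1 ≤ p)]
    (A : Lp I p →L[ℝ] Lp I p) : Prop :=
  IsPos A ∧ (∀ i : I, ∀ s : Finset I, ∑ j ∈ s, A (stdVec p j) i ≤ 1)
          ∧ (∀ j : I, ∀ s : Finset I, ∑ i ∈ s, A (stdVec p j) i ≤ 1)

/-- Increasable doubly substochastic operator on ℓᵖ(I). -/
def IncreasableDsS {I : Type*} {p : ℝ≥0∞} [Fact (1 ≤ p)]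
    (A : Lp I p →L[ℝ] Lp I p) : Prop :=
  IsPos A ∧ ∃ A₁ : Lp I p →L[ℝ] Lp I p, DoublyStochastic A₁ ∧
    ∀ i j : I, A (stdVec p j) i ≤ A₁ (stdVec p j) i

/-- Majorization: `f ≺ g`. -/
def Maj {I : Type*} {p : ℝ≥0∞} [Fact (1 ≤ p)] (f g : Lp I p) : Prop :=
  ∃ D : Lp I p →L[ℝ] Lp I p, DoublyStochastic D ∧ f = D g

/-- Weak majorization: `f ≺_w g`. -/
def MajW {I : Type*} {p : ℝ≥0∞} [Fact (1 ≤ p)] (f g : Lp I p) : Prop :=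
  ∃ D : Lp I p →L[ℝ] Lp I p, DoublySubstochastic D ∧ f = D g

/-- Submajorization: `f ≺_s g`. -/
def MajS {I : Type*} {p : ℝ≥0∞} [Fact (1 ≤ p)] (f g : Lp I p) : Prop :=
  ∃ D : Lp I p →L[ℝ] Lp I p, IncreasableDsS D ∧ f = D g

/-- Permutation operator on ℓᵖ(I). -/
def IsPermutationOp {I : Type*} {p : ℝ≥0∞} [Fact (1 ≤ p)]
    (P : Lp I p →L[ℝ] Lp I p) : Prop :=
  ∃ θ : I ≃ I, ∀ j : I, P (stdVec p j) = stdVec p (θ j)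

/-- `P` is the operator `P_θ` associated with the injection `θ : I → I`,
i.e. `P f = ∑_{k ∈ I} f(k) e_{θ(k)}`. -/
def IsPTheta {I : Type*} {p : ℝ≥0∞} [Fact (1 ≤ p)] (θ : I → I)
    (P : Lp I p →L[ℝ] Lp I p) : Prop :=
  (∀ f : Lp I p, ∀ k : I, P f (θ k) = f k) ∧
  (∀ f : Lp I p, ∀ i : I, i ∉ Set.range θ → P f i = 0)

/-- `T` preserves weak majorization on the positive cone. -/
def PreservesMajW {I : Type*} {p : ℝ≥0∞} [Fact (1 ≤ p)]
    (T : Lp I p →L[ℝ] Lp I p) : Prop :=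
  ∀ f g : Lp I p, (∀ i, 0 ≤ f i) → (∀ i, 0 ≤ g i) → MajW f g → MajW (T f) (T g)

/-- `T` preserves submajorization on the positive cone. -/
def PreservesMajS {I : Type*} {p : ℝ≥0∞} [Fact (1 ≤ p)]
    (T : Lp I p →L[ℝ] Lp I p) : Prop :=
  ∀ f g : Lp I p, (∀ i, 0 ≤ f i) → (∀ i, 0 ≤ g i) → MajS f g → MajS (T f) (T g)

end

/-!
The identity is doubly stochastic, which gives reflexivity. For transitivity, if `D ≤ D₁` and
`E ≤ E₁` entrywise with `D₁`, `E₁` doubly stochastic, then `DE ≤ D₁E₁` entrywise by positivity,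
and `D₁E₁` is again doubly stochastic. Both facts rest on the matrix of a composition being the
product of the matrices, which holds because for `p < ∞` every `f` is the norm-convergent sum of
the `f k • e_k`; the row and column sums of the product are then computed by interchanging
nonnegative double series.
-/

section Tonelli

variable {α β : Type*}

theorem hasSum_prod_of_nonneg {u : α → β → ℝ} (hu : ∀ k j, 0 ≤ u k j) {t : α → ℝ} {a : ℝ}
    (hrow : ∀ k, HasSum (u k) (t k)) (ht : HasSum t a) :
    HasSum (fun x : α × β => u x.1 x.2) a := by
  have hsum : Summable (fun x : α × β => u x.1 x.2) :=
    (summable_prod_of_nonneg fun x => hu x.1 x.2).2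
      ⟨fun k => (hrow k).summable, by simpa only [(hrow _).tsum_eq] using ht.summable⟩
  convert hsum.hasSum
  exact ht.unique (hsum.hasSum.prod_fiberwise hrow)

theorem hasSum_of_hasSum_rows_of_nonneg {u : α → β → ℝ} (hu : ∀ k j, 0 ≤ u k j)
    {t : α → ℝ} {v : β → ℝ} {a : ℝ} (hrow : ∀ k, HasSum (u k) (t k)) (ht : HasSum t a)
    (hcol : ∀ j, HasSum (fun k => u k j) (v j)) :
    HasSum v a :=
  ((Equiv.prodComm β α).hasSum_iff.2 (hasSum_prod_of_nonneg hu hrow ht)).prod_fiberwise hcol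

end Tonelli

section Operators

variable {I : Type*} {p : ℝ≥0∞}

theorem stdVec_eq_lp_single [DecidableEq I] (j : I) :
    stdVec p j = lp.single (E := fun _ : I => ℝ) p j 1 := by
  unfold stdVec
  congr!

theorem stdVec_apply [DecidableEq I] (j i : I) : stdVec p j i = if i = j then 1 else 0 := by
  rw [stdVec_eq_lp_single, lp.single_apply, Pi.single_apply]

theorem stdVec_nonneg (j i : I) : 0 ≤ stdVec p j i := by
  classical
  rw [stdVec_apply]
  split_ifs <;> norm_num

theorem lp_single_eq_smul_stdVec [DecidableEq I] (k : I) (c : ℝ) :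
    lp.single (E := fun _ : I => ℝ) p k c = c • stdVec p k := by
  rw [stdVec_eq_lp_single, ← lp.single_smul, smul_eq_mul, mul_one]

variable [Fact (1 ≤ p)]

theorem hasSum_apply_stdVec (hp : p ≠ ∞) (A : Lp I p →L[ℝ] Lp I p) (f : Lp I p) (i : I) :
    HasSum (fun k => f k * A (stdVec p k) i) (A f i) := by
  classical
  have h := ((lp.evalCLM ℝ (fun _ : I => ℝ) p i).comp A).hasSum (lp.hasSum_single hp f)
  simp only [lp_single_eq_smul_stdVec, ContinuousLinearMap.comp_apply, map_smul] at h
  change HasSum (fun k => f k • A (stdVec p k) i) (A f i) at h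
  simpa only [smul_eq_mul, mul_comm] using h

namespace IsPos

theorem apply_stdVec_nonneg {A : Lp I p →L[ℝ] Lp I p} (hA : IsPos A) (i j : I) :
    0 ≤ A (stdVec p j) i :=
  hA _ (stdVec_nonneg j) i

theorem id : IsPos (ContinuousLinearMap.id ℝ (Lp I p)) := fun _ hf => hf

theorem comp {A B : Lp I p →L[ℝ] Lp I p} (hA : IsPos A) (hB : IsPos B) : IsPos (A.comp B) :=
  fun f hf => hA _ (hB f hf)

theorem comp_apply_stdVec_le (hp : p ≠ ∞) {A A₁ B B₁ : Lp I p →L[ℝ] Lp I p}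
    (hA : IsPos A) (hB : IsPos B) (hAA₁ : ∀ i j, A (stdVec p j) i ≤ A₁ (stdVec p j) i)
    (hBB₁ : ∀ i j, B (stdVec p j) i ≤ B₁ (stdVec p j) i) (i j : I) :
    A.comp B (stdVec p j) i ≤ A₁.comp B₁ (stdVec p j) i :=
  hasSum_le (fun k => mul_le_mul (hBB₁ k j) (hAA₁ i k) (hA.apply_stdVec_nonneg i k)
      ((hB.apply_stdVec_nonneg k j).trans (hBB₁ k j)))
    (hasSum_apply_stdVec hp A _ i) (hasSum_apply_stdVec hp A₁ _ i)

end IsPos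

namespace DoublyStochastic

theorem id : DoublyStochastic (ContinuousLinearMap.id ℝ (Lp I p)) := by
  classical
  refine ⟨IsPos.id, fun i => ?_, fun j => ?_⟩
  · simpa [stdVec_apply, eq_comm] using hasSum_ite_eq i (1 : ℝ)
  · simpa [stdVec_apply] using hasSum_ite_eq j (1 : ℝ)

theorem comp (hp : p ≠ ∞) {A B : Lp I p →L[ℝ] Lp I p} (hA : DoublyStochastic A)
    (hB : DoublyStochastic B) : DoublyStochastic (A.comp B) := by
  obtain ⟨hApos, hArow, hAcol⟩ := hA
  obtain ⟨hBpos, hBrow, hBcol⟩ := hB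
  refine ⟨hApos.comp hBpos, fun i => ?_, fun j => ?_⟩
  · exact hasSum_of_hasSum_rows_of_nonneg (u := fun k j => A (stdVec p k) i * B (stdVec p j) k)
      (fun k j => mul_nonneg (hApos.apply_stdVec_nonneg i k) (hBpos.apply_stdVec_nonneg k j))
      (fun k => by simpa only [mul_one] using (hBrow k).mul_left (A (stdVec p k) i)) (hArow i)
      (fun j => by
        simpa only [mul_comm, ContinuousLinearMap.comp_apply] using
          hasSum_apply_stdVec hp A (B (stdVec p j)) i)
  · exact hasSum_of_hasSum_rows_of_nonneg (u := fun k i => B (stdVec p j) k * A (stdVec p k) i)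
      (fun k i => mul_nonneg (hBpos.apply_stdVec_nonneg k j) (hApos.apply_stdVec_nonneg i k))
      (fun k => by simpa only [mul_one] using (hAcol k).mul_left (B (stdVec p j) k)) (hBcol j)
      (fun i => hasSum_apply_stdVec hp A (B (stdVec p j)) i)

end DoublyStochastic

namespace IncreasableDsS

theorem id : IncreasableDsS (ContinuousLinearMap.id ℝ (Lp I p)) :=
  ⟨IsPos.id, _, DoublyStochastic.id, fun _ _ => le_rfl⟩

theorem comp (hp : p ≠ ∞) {A B : Lp I p →L[ℝ] Lp I p} (hA : IncreasableDsS A)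
    (hB : IncreasableDsS B) : IncreasableDsS (A.comp B) := by
  obtain ⟨hApos, A₁, hA₁, hAA₁⟩ := hA
  obtain ⟨hBpos, B₁, hB₁, hBB₁⟩ := hB
  exact ⟨hApos.comp hBpos, A₁.comp B₁, hA₁.comp hp hB₁,
    hApos.comp_apply_stdVec_le hp hBpos hAA₁ hBB₁⟩

end IncreasableDsS

namespace MajS

theorem refl (f : Lp I p) : MajS f f :=
  ⟨_, IncreasableDsS.id, rfl⟩

theorem trans (hp : p ≠ ∞) {f g h : Lp I p} (hfg : MajS f g) (hgh : MajS g h) : MajS f h := by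
  obtain ⟨D, hD, rfl⟩ := hfg
  obtain ⟨E, hE, rfl⟩ := hgh
  exact ⟨D.comp E, hD.comp hp hE, rfl⟩

end MajS

end Operators

theorem stmt_7_general {I : Type*} (p : ℝ≥0∞) [Fact (1 ≤ p)] (hp : p ≠ ∞) :
    (∀ f : Lp I p, (∀ i, 0 ≤ f i) → MajS f f) ∧
    (∀ f g h : Lp I p, (∀ i, 0 ≤ f i) → (∀ i, 0 ≤ g i) → (∀ i, 0 ≤ h i) →
      MajS f g → MajS g h → MajS f h) :=
  ⟨fun f _ => MajS.refl f, fun _ _ _ _ _ _ => MajS.trans hp⟩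

theorem stmt_7 {I : Type*} [Nonempty I] (p : ℝ≥0∞) [Fact (1 ≤ p)] (hp : p ≠ ∞) :
    (∀ f : Lp I p, (∀ i, 0 ≤ f i) → MajS f f) ∧
    (∀ f g h : Lp I p, (∀ i, 0 ≤ f i) → (∀ i, 0 ≤ g i) → (∀ i, 0 ≤ h i) →
      MajS f g → MajS g h → MajS f h) :=
  stmt_7_general p hp
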